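/- arXiv:1712.01344 — 2 statements merged into one kernel-verified Lean document; each statement's English description precedes it below -/
import Mathlib

section
/- Let τ, ω, θ, σ, δ > 0 with ω > τ, let p, q ≥ 0, and let z ≠ 0 be real (or complex). Then the (p,q)-Mittag-Leffler function satisfies the recurrence E_{δ,θ,σ+θ; p,q}^{(1, τ+1, ω+1)}(z) = (ω/(zτ)) [ E_{δ,θ,σ; p,q}^{(1, τ, ω)}(z) − B_{p,q}(τ, ω−τ) / ([Γ(σ)]^δ B(τ, ω−τ)) ]. -/
open Real MeasureTheory Set Filter

/-- Pochhammer symbol `(a)_n = Γ(a+n)/Γ(a)`. -/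
noncomputable def poch (a : ℝ) (n : ℕ) : ℝ := Real.Gamma (a + n) / Real.Gamma a

/-- Euler beta function. -/
noncomputable def betaE (x y : ℝ) : ℝ := Real.Gamma x * Real.Gamma y / Real.Gamma (x + y)

/-- Extended beta function `B_{p,q}(x,y)`. -/
noncomputable def betaPQ (p q x y : ℝ) : ℝ :=
  ∫ t in Ioo (0:ℝ) 1, t ^ (x - 1) * (1 - t) ^ (y - 1) * Real.exp (-p / t - q / (1 - t))

/-- The `(p,q)`-Mittag-Leffler function `E_{δ,θ,σ;p,q}^{(lam,τ,ω)}(z)`. -/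
noncomputable def mlPQ (δ θ σ lam τ ω p q z : ℝ) : ℝ :=
  ∑' k : ℕ, poch lam k * betaPQ p q (τ + (k : ℝ)) (ω - τ) * z ^ k /
    (Real.Gamma (θ * (k : ℝ) + σ) ^ δ * betaE τ (ω - τ) * (Nat.factorial k : ℝ))

/-!
At `λ = 1` the Pochhammer symbol `(1)_k = k!` cancels the factorial, so the function is the
series of `B_{p,q}(τ + k, ω - τ) z^k / (Γ(θk + σ)^δ B(τ, ω - τ))`. Since
`B(τ + 1, ω - τ) = (τ/ω) B(τ, ω - τ)`, the `k`-th term of the shifted series is `ω/(zτ)` times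
the `(k+1)`-st term of the unshifted one, and the identity amounts to splitting off the term
`k = 0`. That needs convergence: `B_{p,q}(τ + k, ω - τ)` is bounded by its value at `k = 0`, and
log-convexity of `Γ` gives `Γ(x + θ) ≥ (x - 1)^θ Γ(x)`, so the ratio test applies to
`z^k / Γ(θk + σ)^δ`.
-/

lemma poch_one (k : ℕ) : poch 1 k = k.factorial := by
  rw [poch, add_comm, Real.Gamma_nat_eq_factorial, Real.Gamma_one, div_one]

lemma betaE_pos {x y : ℝ} (hx : 0 < x) (hy : 0 < y) : 0 < betaE x y := by
  have := Real.Gamma_pos_of_pos hx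
  have := Real.Gamma_pos_of_pos hy
  have := Real.Gamma_pos_of_pos (add_pos hx hy)
  unfold betaE
  positivity

lemma betaE_add_one_left {x y : ℝ} (hx : x ≠ 0) (hxy : x + y ≠ 0) :
    betaE (x + 1) y = x / (x + y) * betaE x y := by
  rw [betaE, betaE, add_right_comm, Real.Gamma_add_one hx, Real.Gamma_add_one hxy, mul_assoc,
    div_mul_div_comm]

lemma integrableOn_rpow_mul_one_sub_rpow {x y : ℝ} (hx : 0 < x) (hy : 0 < y) :
    IntegrableOn (fun t : ℝ => t ^ (x - 1) * (1 - t) ^ (y - 1)) (Ioo 0 1) := by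
  have hβ := (Complex.betaIntegral_convergent (u := x) (v := y) (by simpa) (by simpa)).norm
  rw [intervalIntegrable_iff_integrableOn_Ioo_of_le zero_le_one] at hβ
  refine hβ.congr_fun (fun t ⟨ht0, ht1⟩ => ?_) measurableSet_Ioo
  have h1t : 1 - (t : ℂ) = ((1 - t : ℝ) : ℂ) := by push_cast; rfl
  dsimp only
  rw [norm_mul, h1t, Complex.norm_cpow_eq_rpow_re_of_pos ht0,
    Complex.norm_cpow_eq_rpow_re_of_pos (sub_pos.2 ht1)]
  simp

lemma integrableOn_betaPQ_integrand {p q x y : ℝ} (hp : 0 ≤ p) (hq : 0 ≤ q)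
    (hx : 0 < x) (hy : 0 < y) :
    IntegrableOn (fun t : ℝ => t ^ (x - 1) * (1 - t) ^ (y - 1) * Real.exp (-p / t - q / (1 - t)))
      (Ioo 0 1) := by
  refine (integrableOn_rpow_mul_one_sub_rpow hx hy).mono' (by fun_prop) ?_
  filter_upwards [ae_restrict_mem measurableSet_Ioo] with t ⟨ht0, ht1⟩
  have hexp : Real.exp (-p / t - q / (1 - t)) ≤ 1 := by
    rw [Real.exp_le_one_iff, neg_div]
    have := div_nonneg hp ht0.le
    have := div_nonneg hq (sub_pos.2 ht1).le
    linarith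
  have := Real.rpow_nonneg ht0.le (x - 1)
  have := Real.rpow_nonneg (sub_pos.2 ht1).le (y - 1)
  rw [Real.norm_of_nonneg (by positivity)]
  exact mul_le_of_le_one_right (by positivity) hexp

lemma betaPQ_nonneg (p q x y : ℝ) : 0 ≤ betaPQ p q x y := by
  refine setIntegral_nonneg measurableSet_Ioo fun t ⟨ht0, ht1⟩ => ?_
  have := Real.rpow_nonneg ht0.le (x - 1)
  have := Real.rpow_nonneg (sub_pos.2 ht1).le (y - 1)
  positivity

lemma betaPQ_add_one_le {p q x y : ℝ} (hp : 0 ≤ p) (hq : 0 ≤ q) (hx : 0 < x) (hy : 0 < y) :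
    betaPQ p q (x + 1) y ≤ betaPQ p q x y := by
  refine setIntegral_mono_on (integrableOn_betaPQ_integrand hp hq (by linarith) hy)
    (integrableOn_betaPQ_integrand hp hq hx hy) measurableSet_Ioo fun t ⟨ht0, ht1⟩ => ?_
  have := Real.rpow_nonneg (sub_pos.2 ht1).le (y - 1)
  have : t ^ (x + 1 - 1) ≤ t ^ (x - 1) :=
    Real.rpow_le_rpow_of_exponent_ge ht0 ht1.le (by linarith)
  gcongr

lemma betaPQ_add_nat_le {p q x y : ℝ} (hp : 0 ≤ p) (hq : 0 ≤ q) (hx : 0 < x) (hy : 0 < y)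
    (k : ℕ) : betaPQ p q (x + k) y ≤ betaPQ p q x y := by
  induction k with
  | zero => simp
  | succ k ih =>
    rw [Nat.cast_succ, ← add_assoc]
    exact (betaPQ_add_one_le hp hq (by positivity) hy).trans ih

/-- The slopes of `log ∘ Γ` on `[x - 1, x]` and `[x, x + a]` increase, and the first is
`log (x - 1)`. -/
lemma rpow_mul_Gamma_le_Gamma_add {x a : ℝ} (hx : 1 < x) (ha : 0 < a) :
    (x - 1) ^ a * Real.Gamma x ≤ Real.Gamma (x + a) := by
  have hx1 : 0 < x - 1 := sub_pos.2 hx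
  have hΓ := Real.Gamma_pos_of_pos hx1
  have hslope := Real.convexOn_log_Gamma.slope_mono_adjacent (mem_Ioi.2 hx1)
    (mem_Ioi.2 (by linarith : 0 < x + a)) (sub_lt_self x one_pos) (lt_add_of_pos_right x ha)
  have hrec : Real.Gamma x = (x - 1) * Real.Gamma (x - 1) := by
    simpa using Real.Gamma_add_one hx1.ne'
  simp only [Function.comp, hrec, Real.log_mul hx1.ne' hΓ.ne', sub_sub_cancel, div_one,
    add_sub_cancel_left, le_div_iff₀ ha] at hslope
  calc (x - 1) ^ a * Real.Gamma x
        = Real.exp (a * Real.log (x - 1) + Real.log (Real.Gamma x)) := by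
        rw [Real.exp_add, Real.exp_log (by rw [hrec]; positivity), mul_comm a,
          Real.rpow_def_of_pos hx1]
    _ ≤ Real.Gamma (x + a) := by
        rw [← Real.exp_log (Real.Gamma_pos_of_pos (by linarith : 0 < x + a)), Real.exp_le_exp,
          hrec, Real.log_mul hx1.ne' hΓ.ne']
        linarith

lemma summable_pow_div_Gamma_rpow {θ δ : ℝ} (hθ : 0 < θ) (hδ : 0 < δ) (σ z : ℝ) :
    Summable fun k : ℕ => z ^ k / Real.Gamma (θ * k + σ) ^ δ := by
  have harg : Tendsto (fun k : ℕ => θ * k + σ) atTop atTop :=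
    tendsto_atTop_add_const_right _ σ (tendsto_natCast_atTop_atTop.const_mul_atTop hθ)
  have hgrowth : Tendsto (fun k : ℕ => (θ * k + σ - 1) ^ (θ * δ)) atTop atTop :=
    (tendsto_rpow_atTop (mul_pos hθ hδ)).comp (tendsto_atTop_add_const_right _ (-1) harg)
  refine summable_of_ratio_norm_eventually_le (r := 1 / 2) (by norm_num) ?_
  filter_upwards [harg.eventually_ge_atTop 2, hgrowth.eventually_ge_atTop (2 * |z|)]
    with k hx hM
  set x := θ * k + σ
  have hx1 : 0 < x - 1 := by linarith
  have hΓ : 0 < Real.Gamma x ^ δ := Real.rpow_pos_of_pos (Real.Gamma_pos_of_pos (by linarith)) δ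
  have hΓθ : 0 < Real.Gamma (x + θ) ^ δ :=
    Real.rpow_pos_of_pos (Real.Gamma_pos_of_pos (by linarith)) δ
  have hratio : 2 * |z| * Real.Gamma x ^ δ ≤ Real.Gamma (x + θ) ^ δ := by
    calc 2 * |z| * Real.Gamma x ^ δ ≤ (x - 1) ^ (θ * δ) * Real.Gamma x ^ δ := by gcongr
      _ = ((x - 1) ^ θ * Real.Gamma x) ^ δ := by
        rw [Real.mul_rpow (by positivity) (Real.Gamma_pos_of_pos (by linarith)).le,
          Real.rpow_mul hx1.le]
      _ ≤ Real.Gamma (x + θ) ^ δ := by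
        gcongr
        exact rpow_mul_Gamma_le_Gamma_add (by linarith) hθ
  have hsucc : θ * ((k + 1 : ℕ) : ℝ) + σ = x + θ := by push_cast; ring
  rw [hsucc, norm_div, norm_div, Real.norm_of_nonneg hΓ.le, Real.norm_of_nonneg hΓθ.le, norm_pow,
    norm_pow, Real.norm_eq_abs, div_le_iff₀ hΓθ]
  calc |z| ^ (k + 1)
        = 1 / 2 * (|z| ^ k / Real.Gamma x ^ δ) * (2 * |z| * Real.Gamma x ^ δ) := by
        field_simp
        ring
    _ ≤ 1 / 2 * (|z| ^ k / Real.Gamma x ^ δ) * Real.Gamma (x + θ) ^ δ := by gcongr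

noncomputable def mlPQOneTerm (δ θ σ τ ω p q z : ℝ) (k : ℕ) : ℝ :=
  betaPQ p q (τ + k) (ω - τ) * z ^ k / (Real.Gamma (θ * k + σ) ^ δ * betaE τ (ω - τ))

lemma mlPQ_one (δ θ σ τ ω p q z : ℝ) :
    mlPQ δ θ σ 1 τ ω p q z = ∑' k, mlPQOneTerm δ θ σ τ ω p q z k := by
  refine tsum_congr fun k => ?_
  rw [mlPQOneTerm, poch_one, mul_comm _ (k.factorial : ℝ), mul_assoc,
    mul_div_mul_left _ _ (by positivity)]

lemma mlPQOneTerm_zero (δ θ σ τ ω p q z : ℝ) :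
    mlPQOneTerm δ θ σ τ ω p q z 0 =
      betaPQ p q τ (ω - τ) / (Real.Gamma σ ^ δ * betaE τ (ω - τ)) := by
  simp [mlPQOneTerm]

lemma mlPQOneTerm_shift (δ θ σ p q : ℝ) {τ ω z : ℝ} (hτ : 0 < τ) (hτω : τ < ω) (hz : z ≠ 0)
    (k : ℕ) :
    mlPQOneTerm δ θ (σ + θ) (τ + 1) (ω + 1) p q z k =
      ω / (z * τ) * mlPQOneTerm δ θ σ τ ω p q z (k + 1) := by
  have hβ : betaE (τ + 1) (ω - τ) = τ / ω * betaE τ (ω - τ) := by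
    simpa using betaE_add_one_left (x := τ) (y := ω - τ) hτ.ne' (by linarith)
  have hx : τ + 1 + k = τ + ((k + 1 : ℕ) : ℝ) := by push_cast; ring
  have hs : θ * k + (σ + θ) = θ * ((k + 1 : ℕ) : ℝ) + σ := by push_cast; ring
  rw [mlPQOneTerm, mlPQOneTerm, add_sub_add_right_eq_sub, hβ, hx, hs, pow_succ]
  field_simp

lemma summable_mlPQOneTerm {δ θ τ ω p q : ℝ} (hδ : 0 < δ) (hθ : 0 < θ) (hτ : 0 < τ)
    (hτω : τ < ω) (hp : 0 ≤ p) (hq : 0 ≤ q) (σ z : ℝ) :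
    Summable (mlPQOneTerm δ θ σ τ ω p q z) := by
  have hβ := betaE_pos hτ (sub_pos.2 hτω)
  refine ((summable_pow_div_Gamma_rpow hθ hδ σ z).norm.mul_left
    (betaPQ p q τ (ω - τ) / betaE τ (ω - τ))).of_norm_bounded fun k => ?_
  have hB := betaPQ_add_nat_le hp hq hτ (sub_pos.2 hτω) k
  have hB0 := betaPQ_nonneg p q (τ + k) (ω - τ)
  have hterm : mlPQOneTerm δ θ σ τ ω p q z k =
      betaPQ p q (τ + k) (ω - τ) / betaE τ (ω - τ) * (z ^ k / Real.Gamma (θ * k + σ) ^ δ) := by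
    rw [mlPQOneTerm]
    ring
  rw [hterm, norm_mul, Real.norm_of_nonneg (div_nonneg hB0 hβ.le)]
  gcongr

theorem statement11_general (τ ω θ σ δ p q z : ℝ)
    (hτ : 0 < τ) (hθ : 0 < θ) (hδ : 0 < δ) (hτω : τ < ω)
    (hp : 0 ≤ p) (hq : 0 ≤ q) (hz : z ≠ 0) :
    mlPQ δ θ (σ + θ) 1 (τ + 1) (ω + 1) p q z =
      ω / (z * τ) *
        (mlPQ δ θ σ 1 τ ω p q z -
          betaPQ p q τ (ω - τ) / (Real.Gamma σ ^ δ * betaE τ (ω - τ))) := by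
  rw [mlPQ_one, mlPQ_one, (summable_mlPQOneTerm hδ hθ hτ hτω hp hq σ z).tsum_eq_zero_add,
    mlPQOneTerm_zero, add_sub_cancel_left, ← tsum_mul_left]
  exact tsum_congr (mlPQOneTerm_shift δ θ σ p q hτ hτω hz)

theorem statement11 (τ ω θ σ δ p q z : ℝ)
    (hτ : 0 < τ) (hω : 0 < ω) (hθ : 0 < θ) (hσ : 0 < σ) (hδ : 0 < δ) (hτω : τ < ω)
    (hp : 0 ≤ p) (hq : 0 ≤ q) (hz : z ≠ 0) :
    mlPQ δ θ (σ + θ) 1 (τ + 1) (ω + 1) p q z =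
      ω / (z * τ) *
        (mlPQ δ θ σ 1 τ ω p q z -
          betaPQ p q τ (ω - τ) / (Real.Gamma σ ^ δ * betaE τ (ω - τ))) :=
  statement11_general τ ω θ σ δ p q z hτ hθ hδ hτω hp hq hz
end

section
/- Let r, α, β, ν, μ, τ, ω > 0 with ω > τ, let q ≥ 0, let z ∈ (0,1), and let a = (a_n)_{n≥1} be a positive increasing sequence tending to ∞ with Σ_{n≥1} a_n^{β−μα} < ∞. Then the function p ↦ S_{μ,ν,τ,ω}^{(α,β)}(r; a; p,q; z) is completely monotonic on (0,∞) (that is, it is infinitely differentiable and (−1)^n d^n/dp^n S_{μ,ν,τ,ω}^{(α,β)}(r; a; p,q; z) ≥ 0 for all integers n ≥ 0 and all p > 0), hence log-convex on (0,∞); in particular the Turán-type inequality [S_{μ,ν,τ,ω}^{(α,β)}(r; a; p+1, q; z)]² ≤ S_{μ,ν,τ,ω}^{(α,β)}(r; a; p, q; z) · S_{μ,ν,τ,ω}^{(α,β)}(r; a; p+2, q; z) holds for all p > 0. -/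
open Real MeasureTheory Set Filter

/-- The `(p,q)`-Mathieu-type power series attached to the sequence `a`. -/
noncomputable def mathieuPQ (μ ν τ ω α β r p q z : ℝ) (a : ℕ → ℝ) : ℝ :=
  ∑' n : ℕ, 2 * a (n + 1) ^ β * poch ν (n + 1) *
      betaPQ p q (τ + ((n : ℝ) + 1)) (ω - τ) * z ^ (n + 1) /
    ((Nat.factorial (n + 1) : ℝ) * betaE τ (ω - τ) * (a (n + 1) ^ α + r ^ 2) ^ μ)

noncomputable def lap (H : ℝ → ℝ) (n : ℕ) (p : ℝ) : ℝ :=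
  ∫ t in Ioo (0:ℝ) 1, H t * (t⁻¹) ^ n * Real.exp (-p / t)

noncomputable def lapC (H : ℝ → ℝ) (w : ℂ) : ℂ :=
  ∫ t in Ioo (0:ℝ) 1, (H t : ℂ) * Complex.exp (-w / (t : ℂ))

section Aux

variable {H : ℝ → ℝ} {C d : ℝ}

lemma aux_base (hd : -1 < d) : IntegrableOn (fun t : ℝ => (1 - t) ^ d) (Ioo (0:ℝ) 1) := by
  have h1 : IntervalIntegrable (fun x : ℝ => x ^ d) volume 0 1 :=
    intervalIntegral.intervalIntegrable_rpow' hd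
  have h2 := (h1.comp_sub_left 1).symm
  have h3 : IntervalIntegrable (fun x : ℝ => (1 - x) ^ d) volume 0 1 := by
    simpa using h2
  exact ((intervalIntegrable_iff_integrableOn_Ioo_of_le (by norm_num)).mp h3)

lemma aux_meas (hH : AEMeasurable H (volume.restrict (Ioo (0:ℝ) 1))) (n : ℕ) (p : ℝ) :
    AEStronglyMeasurable (fun t : ℝ => H t * (t⁻¹) ^ n * Real.exp (-p / t))
      (volume.restrict (Ioo (0:ℝ) 1)) := by
  have m1 : Measurable fun t : ℝ => (t⁻¹) ^ n := measurable_inv.pow_const n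
  have m2 : Measurable fun t : ℝ => Real.exp (-p / t) :=
    (measurable_const.div measurable_id).exp
  exact ((hH.mul m1.aemeasurable).mul m2.aemeasurable).aestronglyMeasurable

lemma aux_pt_bound {p : ℝ} (hp : 0 < p) (n : ℕ) {t : ℝ} (ht : t ∈ Ioo (0:ℝ) 1) :
    (t⁻¹) ^ n * Real.exp (-p / t) ≤ (n.factorial : ℝ) / p ^ n := by
  have ht0 : 0 < t := ht.1
  have hx : 0 < t⁻¹ := inv_pos.mpr ht0
  have hkey : (p * t⁻¹) ^ n / (n.factorial : ℝ) ≤ Real.exp (p * t⁻¹) :=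
    Real.pow_div_factorial_le_exp (x := p * t⁻¹) (by positivity) n
  have harg : -p / t = -(p * t⁻¹) := by ring
  rw [harg]
  have hfac : (0:ℝ) < (n.factorial : ℝ) := by positivity
  have hpn : (0:ℝ) < p ^ n := by positivity
  calc (t⁻¹) ^ n * Real.exp (-(p * t⁻¹))
      = ((p * t⁻¹) ^ n / (n.factorial : ℝ)) * Real.exp (-(p * t⁻¹)) *
        ((n.factorial : ℝ) / p ^ n) := by
        rw [mul_pow]; field_simp
    _ ≤ Real.exp (p * t⁻¹) * Real.exp (-(p * t⁻¹)) * ((n.factorial : ℝ) / p ^ n) := by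
        apply mul_le_mul_of_nonneg_right _ (by positivity)
        exact mul_le_mul_of_nonneg_right hkey (Real.exp_pos _).le
    _ = (n.factorial : ℝ) / p ^ n := by
        rw [← Real.exp_add]; simp

lemma aux_int (hH : AEMeasurable H (volume.restrict (Ioo (0:ℝ) 1)))
    (h0 : ∀ t ∈ Ioo (0:ℝ) 1, 0 ≤ H t)
    (hb : ∀ t ∈ Ioo (0:ℝ) 1, H t ≤ C * (1 - t) ^ d) (hd : -1 < d)
    {p : ℝ} (hp : 0 < p) (n : ℕ) :
    IntegrableOn (fun t : ℝ => H t * (t⁻¹) ^ n * Real.exp (-p / t)) (Ioo (0:ℝ) 1) := by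
  have hbase := (aux_base hd).const_mul (C * ((n.factorial : ℝ) / p ^ n))
  apply Integrable.mono' hbase (aux_meas hH n p)
  rw [ae_restrict_iff' measurableSet_Ioo]
  filter_upwards with t ht
  have h1 : 0 ≤ H t := h0 t ht
  have h2 : (0:ℝ) ≤ (t⁻¹) ^ n * Real.exp (-p / t) := by
    have : (0:ℝ) ≤ t⁻¹ := (inv_pos.mpr ht.1).le
    positivity
  rw [Real.norm_eq_abs, abs_of_nonneg (by rw [mul_assoc]; exact mul_nonneg h1 h2)]
  calc H t * (t⁻¹) ^ n * Real.exp (-p / t)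
      = H t * ((t⁻¹) ^ n * Real.exp (-p / t)) := by ring
    _ ≤ (C * (1 - t) ^ d) * ((n.factorial : ℝ) / p ^ n) :=
        mul_le_mul (hb t ht) (aux_pt_bound hp n ht) h2 ((h1.trans (hb t ht)))
    _ = C * ((n.factorial : ℝ) / p ^ n) * (1 - t) ^ d := by ring

lemma aux_nonneg (h0 : ∀ t ∈ Ioo (0:ℝ) 1, 0 ≤ H t) (n : ℕ) (p : ℝ) :
    0 ≤ lap H n p := by
  apply setIntegral_nonneg measurableSet_Ioo
  intro t ht
  have : (0:ℝ) ≤ t⁻¹ := (inv_pos.mpr ht.1).le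
  have := h0 t ht
  positivity

end Aux

section Aux2
variable {H : ℝ → ℝ} {C d : ℝ}

lemma aux_deriv (hH : AEMeasurable H (volume.restrict (Ioo (0:ℝ) 1)))
    (h0 : ∀ t ∈ Ioo (0:ℝ) 1, 0 ≤ H t)
    (hb : ∀ t ∈ Ioo (0:ℝ) 1, H t ≤ C * (1 - t) ^ d) (hd : -1 < d)
    {p : ℝ} (hp : 0 < p) (n : ℕ) :
    HasDerivAt (lap H n) (-lap H (n + 1) p) p := by
  have hε : (0:ℝ) < p / 2 := by linarith
  have key := hasDerivAt_integral_of_dominated_loc_of_deriv_le (μ := volume.restrict (Ioo (0:ℝ) 1))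
    (F := fun x t => H t * (t⁻¹) ^ n * Real.exp (-x / t))
    (F' := fun x t => -(H t * (t⁻¹) ^ (n + 1) * Real.exp (-x / t)))
    (bound := fun t => H t * (t⁻¹) ^ (n + 1) * Real.exp (-(p / 2) / t))
    (x₀ := p) (Metric.ball_mem_nhds p hε)
    (Eventually.of_forall fun x => aux_meas hH n x)
    (aux_int hH h0 hb hd hp n)
    ((aux_meas hH (n + 1) p).neg)
    ?_ (aux_int hH h0 hb hd hε (n + 1)) ?_
  · have h2 : (∫ t in Ioo (0:ℝ) 1, -(H t * (t⁻¹) ^ (n+1) * Real.exp (-p / t)))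
        = -lap H (n+1) p := by
      rw [integral_neg]; rfl
    rw [← h2]
    exact key.2
  · rw [ae_restrict_iff' measurableSet_Ioo]
    filter_upwards with t ht x hx
    have ht0 : 0 < t := ht.1
    have hxp : p / 2 < x := by
      have := abs_lt.mp (by simpa [Real.dist_eq] using Metric.mem_ball.mp hx : |x - p| < p / 2) |>.1
      linarith
    have h1 : 0 ≤ H t := h0 t ht
    have h2 : (0:ℝ) ≤ (t⁻¹) ^ (n+1) := by positivity
    rw [norm_neg, Real.norm_eq_abs, abs_of_nonneg (by positivity)]
    have hmono : Real.exp (-x / t) ≤ Real.exp (-(p/2) / t) := by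
      apply Real.exp_le_exp.mpr
      rw [div_le_div_iff_of_pos_right ht0]
      linarith
    exact mul_le_mul_of_nonneg_left hmono (by positivity)
  · filter_upwards with t x hx
    have hd1 : HasDerivAt (fun x : ℝ => -x / t) (-1 / t) x := by
      simpa using ((hasDerivAt_id x).neg.div_const t)
    have hd2 := hd1.exp
    have hd3 := hd2.const_mul (H t * (t⁻¹) ^ n)
    refine hd3.congr_deriv ?_
    rw [pow_succ]
    ring

end Aux2

section Aux3
variable {H : ℝ → ℝ} {C d : ℝ}

lemma aux_iter (hH : AEMeasurable H (volume.restrict (Ioo (0:ℝ) 1)))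
    (h0 : ∀ t ∈ Ioo (0:ℝ) 1, 0 ≤ H t)
    (hb : ∀ t ∈ Ioo (0:ℝ) 1, H t ≤ C * (1 - t) ^ d) (hd : -1 < d)
    {f : ℝ → ℝ} (hf : ∀ p, 0 < p → f p = lap H 0 p) (n : ℕ) :
    ∀ p, 0 < p → iteratedDeriv n f p = (-1 : ℝ) ^ n * lap H n p := by
  induction n with
  | zero => intro p hp; simpa using hf p hp
  | succ n ih =>
    intro p hp
    rw [iteratedDeriv_succ]
    have hev : iteratedDeriv n f =ᶠ[nhds p] fun x => (-1 : ℝ) ^ n * lap H n x := by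
      filter_upwards [isOpen_Ioi.mem_nhds (show p ∈ Ioi (0:ℝ) from hp)] with x hx
      exact ih x hx
    rw [hev.deriv_eq]
    have hda : HasDerivAt (fun x => (-1 : ℝ) ^ n * lap H n x)
        ((-1 : ℝ) ^ n * (-lap H (n + 1) p)) p :=
      (aux_deriv hH h0 hb hd hp n).const_mul _
    rw [hda.deriv]
    rw [pow_succ]
    ring

lemma aux_pos (hH : AEMeasurable H (volume.restrict (Ioo (0:ℝ) 1)))
    (h0 : ∀ t ∈ Ioo (0:ℝ) 1, 0 ≤ H t)
    (hb : ∀ t ∈ Ioo (0:ℝ) 1, H t ≤ C * (1 - t) ^ d) (hd : -1 < d)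
    (hpos : ∀ t ∈ Ioo (0:ℝ) 1, 0 < H t) {p : ℝ} (hp : 0 < p) :
    0 < lap H 0 p := by
  rw [lap]
  rw [setIntegral_pos_iff_support_of_nonneg_ae ?_ (aux_int hH h0 hb hd hp 0)]
  · apply lt_of_lt_of_le ?_ (measure_mono (?_ :
      Ioo (0:ℝ) 1 ⊆ Function.support (fun t => H t * (t⁻¹) ^ 0 * Real.exp (-p / t)) ∩ Ioo 0 1))
    · simp [Real.volume_Ioo]
    · intro t ht
      refine ⟨?_, ht⟩
      have h1 := hpos t ht
      have h2 := Real.exp_pos (-p / t)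
      simp only [Function.mem_support, pow_zero, mul_one]
      positivity
  · rw [EventuallyLE, ae_restrict_iff' measurableSet_Ioo]
    filter_upwards with t ht
    have h1 := (hpos t ht).le
    have : (0:ℝ) ≤ t⁻¹ := (inv_pos.mpr ht.1).le
    simp only [Pi.zero_apply]
    positivity

end Aux3

section Aux4
variable {H : ℝ → ℝ} {C d : ℝ}

lemma aux_measC (hH : AEMeasurable H (volume.restrict (Ioo (0:ℝ) 1))) (w : ℂ) :
    AEStronglyMeasurable (fun t : ℝ => (H t : ℂ) * Complex.exp (-w / (t : ℂ)))
      (volume.restrict (Ioo (0:ℝ) 1)) := by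
  have m2 : Measurable fun t : ℝ => Complex.exp (-w / (t : ℂ)) :=
    (measurable_const.div Complex.measurable_ofReal).cexp
  exact ((Complex.measurable_ofReal.comp_aemeasurable hH).mul
    m2.aemeasurable).aestronglyMeasurable

lemma aux_norm_exp (w : ℂ) {t : ℝ} (ht : 0 < t) :
    ‖Complex.exp (-w / (t : ℂ))‖ = Real.exp (-w.re / t) := by
  rw [Complex.norm_exp]
  congr 1
  have : -w / (t : ℂ) = -w * ((t⁻¹ : ℝ) : ℂ) := by
    push_cast
    field_simp
  rw [this]
  rw [mul_comm, Complex.re_ofReal_mul]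
  simp [div_eq_mul_inv]
  ring

lemma aux_intC (hH : AEMeasurable H (volume.restrict (Ioo (0:ℝ) 1)))
    (h0 : ∀ t ∈ Ioo (0:ℝ) 1, 0 ≤ H t)
    (hb : ∀ t ∈ Ioo (0:ℝ) 1, H t ≤ C * (1 - t) ^ d) (hd : -1 < d)
    {w : ℂ} (hw : 0 < w.re) :
    Integrable (fun t : ℝ => (H t : ℂ) * Complex.exp (-w / (t : ℂ)))
      (volume.restrict (Ioo (0:ℝ) 1)) := by
  apply Integrable.mono' ((aux_int hH h0 hb hd hw 0).congr_fun
    (fun t ht => by simp : ∀ t ∈ Ioo (0:ℝ) 1,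
      (fun t : ℝ => H t * (t⁻¹) ^ 0 * Real.exp (-w.re / t)) t
        = (fun t : ℝ => H t * Real.exp (-w.re / t)) t) measurableSet_Ioo)
    (aux_measC hH w)
  rw [ae_restrict_iff' measurableSet_Ioo]
  filter_upwards with t ht
  rw [norm_mul, Complex.norm_real, aux_norm_exp w ht.1,
    Real.norm_eq_abs, abs_of_nonneg (h0 t ht)]

lemma aux_derivC (hH : AEMeasurable H (volume.restrict (Ioo (0:ℝ) 1)))
    (h0 : ∀ t ∈ Ioo (0:ℝ) 1, 0 ≤ H t)
    (hb : ∀ t ∈ Ioo (0:ℝ) 1, H t ≤ C * (1 - t) ^ d) (hd : -1 < d)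
    {w : ℂ} (hw : 0 < w.re) :
    DifferentiableAt ℂ (lapC H) w := by
  have hε : (0:ℝ) < w.re / 2 := by linarith
  have key := hasDerivAt_integral_of_dominated_loc_of_deriv_le
    (μ := volume.restrict (Ioo (0:ℝ) 1)) (𝕜 := ℂ)
    (F := fun x t => (H t : ℂ) * Complex.exp (-x / (t : ℂ)))
    (F' := fun x t => (H t : ℂ) * (Complex.exp (-x / (t : ℂ)) * (-1 / (t : ℂ))))
    (bound := fun t => H t * (t⁻¹) ^ 1 * Real.exp (-(w.re / 2) / t))
    (x₀ := w) (Metric.ball_mem_nhds w hε)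
    (Eventually.of_forall fun x => aux_measC hH x)
    (aux_intC hH h0 hb hd hw) ?_ ?_ (aux_int hH h0 hb hd hε 1) ?_
  · exact ⟨_, key.2⟩
  · have m2 : Measurable fun t : ℝ =>
        Complex.exp (-w / (t : ℂ)) * (-1 / (t : ℂ)) :=
      ((measurable_const.div Complex.measurable_ofReal).cexp).mul
        (measurable_const.div Complex.measurable_ofReal)
    exact ((Complex.measurable_ofReal.comp_aemeasurable hH).mul
      m2.aemeasurable).aestronglyMeasurable
  · rw [ae_restrict_iff' measurableSet_Ioo]
    filter_upwards with t ht x hx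
    have ht0 : 0 < t := ht.1
    have hxre : w.re / 2 < x.re := by
      have h1 : |(x - w).re| ≤ ‖x - w‖ := Complex.abs_re_le_norm _
      have h2 : ‖x - w‖ < w.re / 2 := by
        simpa [Complex.dist_eq] using Metric.mem_ball.mp hx
      have := abs_lt.mp (lt_of_le_of_lt h1 h2) |>.1
      simp only [Complex.sub_re] at this
      linarith
    rw [norm_mul, norm_mul, Complex.norm_real, aux_norm_exp x ht0,
      Real.norm_eq_abs, abs_of_nonneg (h0 t ht)]
    have hn1 : ‖(-1 : ℂ) / (t : ℂ)‖ = t⁻¹ := by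
      rw [norm_div]
      simp [abs_of_nonneg ht0.le]
    rw [hn1]
    have hmono : Real.exp (-x.re / t) ≤ Real.exp (-(w.re/2) / t) := by
      apply Real.exp_le_exp.mpr
      rw [div_le_div_iff_of_pos_right ht0]
      linarith
    calc H t * (Real.exp (-x.re / t) * t⁻¹)
        ≤ H t * (Real.exp (-(w.re/2) / t) * t⁻¹) := by
          apply mul_le_mul_of_nonneg_left ?_ (h0 t ht)
          exact mul_le_mul_of_nonneg_right hmono (by positivity)
      _ = H t * (t⁻¹) ^ 1 * Real.exp (-(w.re/2) / t) := by ring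
  · filter_upwards with t x hx
    have hd1 : HasDerivAt (fun x : ℂ => -x / (t : ℂ)) (-1 / (t : ℂ)) x := by
      simpa using ((hasDerivAt_id x).neg.div_const (t : ℂ))
    exact (hd1.cexp).const_mul _

lemma aux_contDiff (hH : AEMeasurable H (volume.restrict (Ioo (0:ℝ) 1)))
    (h0 : ∀ t ∈ Ioo (0:ℝ) 1, 0 ≤ H t)
    (hb : ∀ t ∈ Ioo (0:ℝ) 1, H t ≤ C * (1 - t) ^ d) (hd : -1 < d) :
    ContDiffOn ℝ (⊤ : ℕ∞) (fun p : ℝ => (lapC H (p : ℂ)).re) (Ioi (0:ℝ)) := by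
  have hopen : IsOpen {w : ℂ | 0 < w.re} := by
    exact isOpen_lt continuous_const Complex.continuous_re
  have hdiff : DifferentiableOn ℂ (lapC H) {w : ℂ | 0 < w.re} :=
    fun w hw => (aux_derivC hH h0 hb hd hw).differentiableWithinAt
  have han : AnalyticOnNhd ℂ (lapC H) {w : ℂ | 0 < w.re} :=
    hdiff.analyticOnNhd hopen
  have hanR : AnalyticOnNhd ℝ (lapC H) {w : ℂ | 0 < w.re} := han.restrictScalars
  have h2 : AnalyticOnNhd ℝ (fun p : ℝ => (p : ℂ)) (Ioi (0:ℝ)) := by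
    intro x _
    exact Complex.ofRealCLM.analyticAt x
  have h3 : AnalyticOnNhd ℝ (fun z : ℂ => z.re) univ := by
    intro x _
    exact Complex.reCLM.analyticAt x
  have hcomp : AnalyticOnNhd ℝ (fun p : ℝ => (lapC H (p : ℂ)).re) (Ioi (0:ℝ)) := by
    apply (h3.comp (hanR.comp h2 ?_) (mapsTo_univ _ _) : AnalyticOnNhd ℝ _ _)
    intro x hx
    simpa using (hx : (0:ℝ) < x)
  exact hcomp.contDiffOn_of_completeSpace

lemma aux_lapC_real (hH : AEMeasurable H (volume.restrict (Ioo (0:ℝ) 1))) (p : ℝ) :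
    lapC H (p : ℂ) = ((lap H 0 p : ℝ) : ℂ) := by
  have step1 : lapC H (p : ℂ) = ∫ t in Ioo (0:ℝ) 1,
      ((H t * (t⁻¹) ^ 0 * Real.exp (-p / t) : ℝ) : ℂ) := by
    rw [lapC]
    apply setIntegral_congr_fun measurableSet_Ioo
    intro t _
    push_cast [Complex.ofReal_exp]
    ring
  rw [step1, lap]
  exact integral_ofReal (𝕜 := ℂ)

end Aux4

section Aux5
open scoped ENNReal
variable {H : ℝ → ℝ} {C d : ℝ}

lemma aux_ofReal_lap (hH : AEMeasurable H (volume.restrict (Ioo (0:ℝ) 1)))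
    (h0 : ∀ t ∈ Ioo (0:ℝ) 1, 0 ≤ H t)
    (hb : ∀ t ∈ Ioo (0:ℝ) 1, H t ≤ C * (1 - t) ^ d) (hd : -1 < d)
    {p : ℝ} (hp : 0 < p) :
    ENNReal.ofReal (lap H 0 p)
      = ∫⁻ t in Ioo (0:ℝ) 1, ENNReal.ofReal (H t * Real.exp (-p / t)) := by
  rw [lap]
  rw [ofReal_integral_eq_lintegral_ofReal (aux_int hH h0 hb hd hp 0) ?_]
  · exact lintegral_congr fun t => by simp
  · rw [EventuallyLE, ae_restrict_iff' measurableSet_Ioo]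
    filter_upwards with t ht
    have h1 := h0 t ht
    have h2 : (0:ℝ) ≤ t⁻¹ := (inv_pos.mpr ht.1).le
    simp only [Pi.zero_apply]
    positivity

lemma aux_holder (hH : AEMeasurable H (volume.restrict (Ioo (0:ℝ) 1)))
    (h0 : ∀ t ∈ Ioo (0:ℝ) 1, 0 ≤ H t)
    (hb : ∀ t ∈ Ioo (0:ℝ) 1, H t ≤ C * (1 - t) ^ d) (hd : -1 < d)
    {x y va vb : ℝ} (hx : 0 < x) (hy : 0 < y) (hva : 0 < va) (hvb : 0 < vb)
    (hab : va + vb = 1) :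
    lap H 0 (va * x + vb * y) ≤ lap H 0 x ^ va * lap H 0 y ^ vb := by
  have hva1 : va < 1 := by linarith
  have hc : 0 < va * x + vb * y := by positivity
  -- conjugate exponents
  have hpq : (1 / va).HolderConjugate (1 / vb) := by
    rw [Real.holderConjugate_iff]
    constructor
    · rw [lt_div_iff₀ hva, one_mul]; exact hva1
    · simp only [one_div, inv_inv]; exact hab
  set f : ℝ → ℝ≥0∞ := fun t => ENNReal.ofReal (H t * Real.exp (-x / t)) ^ va with hf
  set g : ℝ → ℝ≥0∞ := fun t => ENNReal.ofReal (H t * Real.exp (-y / t)) ^ vb with hg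
  have hmx : AEMeasurable (fun t : ℝ => H t * Real.exp (-x / t))
      (volume.restrict (Ioo (0:ℝ) 1)) := by
    have := (aux_meas hH 0 x).aemeasurable
    simpa using this
  have hmy : AEMeasurable (fun t : ℝ => H t * Real.exp (-y / t))
      (volume.restrict (Ioo (0:ℝ) 1)) := by
    have := (aux_meas hH 0 y).aemeasurable
    simpa using this
  have hmf : AEMeasurable f (volume.restrict (Ioo (0:ℝ) 1)) :=
    (hmx.ennreal_ofReal).pow aemeasurable_const
  have hmg : AEMeasurable g (volume.restrict (Ioo (0:ℝ) 1)) :=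
    (hmy.ennreal_ofReal).pow aemeasurable_const
  have key := ENNReal.lintegral_mul_le_Lp_mul_Lq (volume.restrict (Ioo (0:ℝ) 1)) hpq hmf hmg
  -- identify the three lintegrals
  have hfg : ∫⁻ t in Ioo (0:ℝ) 1, (f * g) t
      = ∫⁻ t in Ioo (0:ℝ) 1, ENNReal.ofReal (H t * Real.exp (-(va * x + vb * y) / t)) := by
    apply lintegral_congr_ae
    apply Filter.eventuallyEq_of_mem (self_mem_ae_restrict measurableSet_Ioo)
    intro t ht
    have hHt := h0 t ht
    have he1 : (0:ℝ) ≤ H t * Real.exp (-x / t) := by positivity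
    have he2 : (0:ℝ) ≤ H t * Real.exp (-y / t) := by positivity
    simp only [Pi.mul_apply, hf, hg]
    rw [ENNReal.ofReal_rpow_of_nonneg he1 hva.le,
      ENNReal.ofReal_rpow_of_nonneg he2 hvb.le,
      ← ENNReal.ofReal_mul (by positivity)]
    congr 1
    rw [Real.mul_rpow hHt (Real.exp_pos _).le, Real.mul_rpow hHt (Real.exp_pos _).le]
    rw [← Real.exp_mul, ← Real.exp_mul]
    have hH1 : H t ^ va * H t ^ vb = H t := by
      rw [← Real.rpow_add_of_nonneg hHt hva.le hvb.le, hab, Real.rpow_one]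
    calc H t ^ va * Real.exp (-x / t * va) * (H t ^ vb * Real.exp (-y / t * vb))
        = (H t ^ va * H t ^ vb) * (Real.exp (-x / t * va) * Real.exp (-y / t * vb)) := by ring
      _ = H t * Real.exp (-(va * x + vb * y) / t) := by
          rw [hH1, ← Real.exp_add]
          congr 1
          ring
  have hfp : ∫⁻ t in Ioo (0:ℝ) 1, f t ^ (1 / va)
      = ∫⁻ t in Ioo (0:ℝ) 1, ENNReal.ofReal (H t * Real.exp (-x / t)) := by
    apply lintegral_congr
    intro t
    rw [hf, ← ENNReal.rpow_mul, mul_one_div_cancel hva.ne', ENNReal.rpow_one]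
  have hgp : ∫⁻ t in Ioo (0:ℝ) 1, g t ^ (1 / vb)
      = ∫⁻ t in Ioo (0:ℝ) 1, ENNReal.ofReal (H t * Real.exp (-y / t)) := by
    apply lintegral_congr
    intro t
    rw [hg, ← ENNReal.rpow_mul, mul_one_div_cancel hvb.ne', ENNReal.rpow_one]
  rw [hfg, hfp, hgp] at key
  have h1 : (1:ℝ) / (1 / va) = va := one_div_one_div va
  have h2 : (1:ℝ) / (1 / vb) = vb := one_div_one_div vb
  rw [h1, h2] at key
  rw [← aux_ofReal_lap hH h0 hb hd hc, ← aux_ofReal_lap hH h0 hb hd hx,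
    ← aux_ofReal_lap hH h0 hb hd hy] at key
  have hnn0 : ∀ s : ℝ, 0 ≤ lap H 0 s := by
    intro s
    apply setIntegral_nonneg measurableSet_Ioo
    intro t ht
    have h1 := h0 t ht
    have h2 : (0:ℝ) ≤ t⁻¹ := (inv_pos.mpr ht.1).le
    positivity
  rw [ENNReal.ofReal_rpow_of_nonneg (hnn0 x) hva.le,
    ENNReal.ofReal_rpow_of_nonneg (hnn0 y) hvb.le,
    ← ENNReal.ofReal_mul (Real.rpow_nonneg (hnn0 x) va)] at key
  have hnn : (0:ℝ) ≤ lap H 0 x ^ va * lap H 0 y ^ vb :=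
    mul_nonneg (Real.rpow_nonneg (hnn0 x) va) (Real.rpow_nonneg (hnn0 y) vb)
  exact (ENNReal.ofReal_le_ofReal_iff hnn).mp key

end Aux5

noncomputable def qseq (ν z : ℝ) (n : ℕ) : ℝ :=
  poch ν (n + 1) * z ^ (n + 1) / (Nat.factorial (n + 1) : ℝ)
section Coef0

variable {r α β ν μ τ ω q z : ℝ} {a : ℕ → ℝ}

lemma poch_pos (hν : 0 < ν) (n : ℕ) : 0 < poch ν n := by
  apply div_pos (Real.Gamma_pos_of_pos ?_) (Real.Gamma_pos_of_pos hν)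
  positivity

lemma poch_succ (hν : 0 < ν) (n : ℕ) : poch ν (n + 1) = (ν + n) * poch ν n := by
  unfold poch
  push_cast
  rw [show ν + ((n : ℝ) + 1) = (ν + (n : ℝ)) + 1 by ring,
    Real.Gamma_add_one (by positivity : (ν + (n:ℝ)) ≠ 0)]
  ring

lemma betaE_pos_s18 (hτ : 0 < τ) (hτω : τ < ω) : 0 < betaE τ (ω - τ) := by
  unfold betaE
  have h1 : (0:ℝ) < ω - τ := by linarith
  apply div_pos (mul_pos (Real.Gamma_pos_of_pos hτ) (Real.Gamma_pos_of_pos h1))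
  apply Real.Gamma_pos_of_pos
  linarith

lemma qseq_pos (hν : 0 < ν) (hz : 0 < z) (n : ℕ) : 0 < qseq ν z n := by
  unfold qseq
  have := poch_pos hν (n + 1)
  positivity

lemma qseq_summable (hν : 0 < ν) (hz : z ∈ Ioo (0:ℝ) 1) : Summable (qseq ν z) := by
  apply summable_of_ratio_norm_eventually_le (r := (1 + z) / 2)
  · rcases hz with ⟨hz0, hz1⟩; linarith
  · have hN : ∀ᶠ n : ℕ in atTop, (2 * z * (ν + 1)) / (1 - z) ≤ (n : ℝ) := by
      have := tendsto_natCast_atTop_atTop (R := ℝ)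
      exact this.eventually_ge_atTop _
    filter_upwards [hN] with n hn
    rcases hz with ⟨hz0, hz1⟩
    have hzz : (0:ℝ) < 1 - z := by linarith
    have hn' : 2 * z * (ν + 1) ≤ (1 - z) * n := by
      rw [div_le_iff₀ hzz] at hn
      linarith [hn]
    have hq : qseq ν z (n + 1) = qseq ν z n * ((ν + (n+1)) * z / ((n:ℝ) + 2)) := by
      unfold qseq
      rw [poch_succ hν (n + 1)]
      push_cast
      rw [Nat.factorial_succ (n + 1)]
      push_cast
      field_simp
      ring
    have hqn := (qseq_pos hν hz0 n).le
    rw [Real.norm_eq_abs, Real.norm_eq_abs, abs_of_nonneg (qseq_pos hν hz0 (n+1)).le,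
      abs_of_nonneg hqn, hq, mul_comm ((1 + z) / 2) (qseq ν z n)]
    apply mul_le_mul_of_nonneg_left ?_ hqn
    rw [div_le_iff₀ (by positivity : (0:ℝ) < (n:ℝ) + 2)]
    push_cast
    nlinarith [hn', hz0.le, hν.le]

lemma qseq_bdd (hν : 0 < ν) (hz : z ∈ Ioo (0:ℝ) 1) :
    ∃ K : ℝ, 0 ≤ K ∧ ∀ n, qseq ν z n ≤ K := by
  have h := (qseq_summable hν hz).tendsto_atTop_zero
  obtain ⟨K, hK⟩ := h.bddAbove_range
  refine ⟨K, ?_, fun n => hK (mem_range_self n)⟩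
  exact le_trans (qseq_pos hν hz.1 0).le (hK (mem_range_self 0))

end Coef0

/-- coefficients of the Mathieu series -/
noncomputable def mcoef (r α β ν μ τ ω z : ℝ) (a : ℕ → ℝ) (n : ℕ) : ℝ :=
  2 * a (n + 1) ^ β * poch ν (n + 1) * z ^ (n + 1) /
    ((Nat.factorial (n + 1) : ℝ) * betaE τ (ω - τ) * (a (n + 1) ^ α + r ^ 2) ^ μ)

/-- the kernel -/
noncomputable def mker (r α β ν μ τ ω q z : ℝ) (a : ℕ → ℝ) (t : ℝ) : ℝ :=
  (∑' n : ℕ, mcoef r α β ν μ τ ω z a n * t ^ n) * t ^ τ * Real.exp (-q / (1 - t)) *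
    (1 - t) ^ (ω - τ - 1)

section Coef

variable {r α β ν μ τ ω q z : ℝ} {a : ℕ → ℝ}
variable (hr : 0 < r) (hα : 0 < α) (hβ : 0 < β) (hν : 0 < ν) (hμ : 0 < μ)
  (hτ : 0 < τ) (hω : 0 < ω) (hτω : τ < ω) (hq : 0 ≤ q) (hz : z ∈ Ioo (0:ℝ) 1)
  (hapos : ∀ n : ℕ, 1 ≤ n → 0 < a n)
  (hsum : Summable fun n : ℕ => a (n + 1) ^ (β - μ * α))

include hr hν hτ hτω hz hapos

lemma mcoef_pos (n : ℕ) : 0 < mcoef r α β ν μ τ ω z a n := by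
  unfold mcoef
  have ha := hapos (n + 1) (by omega)
  have h1 := poch_pos hν (n + 1)
  have h2 := betaE_pos_s18 hτ hτω
  have h3 : (0:ℝ) < a (n + 1) ^ β := Real.rpow_pos_of_pos ha β
  have h4 : (0:ℝ) < a (n + 1) ^ α + r ^ 2 := by
    have := Real.rpow_pos_of_pos ha α; positivity
  have h5 : (0:ℝ) < (a (n + 1) ^ α + r ^ 2) ^ μ := Real.rpow_pos_of_pos h4 μ
  have h6 : (0:ℝ) < z ^ (n + 1) := pow_pos hz.1 _
  have h7 : (0:ℝ) < (Nat.factorial (n + 1) : ℝ) := by positivity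
  positivity

omit hν hz in
lemma mcoef_eq (n : ℕ) : mcoef r α β ν μ τ ω z a n
    = (2 / betaE τ (ω - τ)) * qseq ν z n *
      (a (n + 1) ^ β / (a (n + 1) ^ α + r ^ 2) ^ μ) := by
  unfold mcoef qseq
  have ha := hapos (n + 1) (by omega)
  have h2 := betaE_pos_s18 hτ hτω
  have h4 : (0:ℝ) < a (n + 1) ^ α + r ^ 2 := by
    have := Real.rpow_pos_of_pos ha α; positivity
  have h5 : (0:ℝ) < (a (n + 1) ^ α + r ^ 2) ^ μ := Real.rpow_pos_of_pos h4 μ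
  have h7 : (0:ℝ) < (Nat.factorial (n + 1) : ℝ) := by positivity
  field_simp

omit hr hα hν hτ hτω hz in
include hμ in
lemma mcoef_le (n : ℕ) : a (n + 1) ^ β / (a (n + 1) ^ α + r ^ 2) ^ μ
    ≤ a (n + 1) ^ (β - μ * α) := by
  have ha := hapos (n + 1) (by omega)
  have hden : a (n + 1) ^ (α * μ) ≤ (a (n + 1) ^ α + r ^ 2) ^ μ := by
    rw [Real.rpow_mul ha.le]
    apply Real.rpow_le_rpow (Real.rpow_pos_of_pos ha α).le ?_ hμ.le
    nlinarith [sq_nonneg r]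
  have h1 : (0:ℝ) < a (n + 1) ^ (α * μ) := Real.rpow_pos_of_pos ha _
  calc a (n + 1) ^ β / (a (n + 1) ^ α + r ^ 2) ^ μ
      ≤ a (n + 1) ^ β / a (n + 1) ^ (α * μ) :=
        div_le_div_of_nonneg_left (Real.rpow_pos_of_pos ha β).le h1 hden
    _ = a (n + 1) ^ (β - μ * α) := by
        rw [← Real.rpow_sub ha]
        congr 1
        ring

include hα hμ hsum in
lemma mcoef_summable : Summable (mcoef r α β ν μ τ ω z a) := by
  obtain ⟨K, hK0, hK⟩ := qseq_bdd hν hz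
  have hbound : ∀ n, mcoef r α β ν μ τ ω z a n
      ≤ (2 / betaE τ (ω - τ)) * K * a (n + 1) ^ (β - μ * α) := by
    intro n
    rw [mcoef_eq hr hτ hτω hapos n]
    have h2 := betaE_pos_s18 hτ hτω
    have hB : (0:ℝ) ≤ 2 / betaE τ (ω - τ) := by positivity
    have ha := hapos (n + 1) (by omega)
    have hs0 : (0:ℝ) ≤ a (n + 1) ^ β / (a (n + 1) ^ α + r ^ 2) ^ μ := by
      have h4 : (0:ℝ) < a (n + 1) ^ α + r ^ 2 := by
        have := Real.rpow_pos_of_pos ha α; positivity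
      have := Real.rpow_pos_of_pos ha β
      have := Real.rpow_pos_of_pos h4 μ
      positivity
    rw [mul_assoc, mul_assoc]
    apply mul_le_mul_of_nonneg_left ?_ hB
    exact mul_le_mul (hK n) (mcoef_le hμ hapos n) hs0 hK0
  exact Summable.of_nonneg_of_le (fun n => (mcoef_pos (α := α) (β := β) (μ := μ) hr hν hτ hτω hz hapos n).le)
    hbound (hsum.mul_left _)

end Coef

section Ker

variable {r α β ν μ τ ω q z : ℝ} {a : ℕ → ℝ}
variable (hr : 0 < r) (hα : 0 < α) (hβ : 0 < β) (hν : 0 < ν) (hμ : 0 < μ)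
  (hτ : 0 < τ) (hω : 0 < ω) (hτω : τ < ω) (hq : 0 ≤ q) (hz : z ∈ Ioo (0:ℝ) 1)
  (hapos : ∀ n : ℕ, 1 ≤ n → 0 < a n)
  (hsum : Summable fun n : ℕ => a (n + 1) ^ (β - μ * α))

set_option linter.unusedSectionVars false

include hr hα hβ hν hμ hτ hω hτω hq hz hapos hsum

lemma mg_summable {t : ℝ} (ht : t ∈ Ioo (0:ℝ) 1) :
    Summable (fun n => mcoef r α β ν μ τ ω z a n * t ^ n) := by
  apply Summable.of_nonneg_of_le ?_ ?_ (mcoef_summable hr hα hν hμ hτ hτω hz hapos hsum)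
  · intro n
    have := (mcoef_pos (α := α) (β := β) (μ := μ) hr hν hτ hτω hz hapos n).le
    have := pow_nonneg ht.1.le n
    positivity
  · intro n
    apply mul_le_of_le_one_right (mcoef_pos (α := α) (β := β) (μ := μ) hr hν hτ hτω hz hapos n).le
    exact pow_le_one₀ ht.1.le ht.2.le

lemma mg_le {t : ℝ} (ht : t ∈ Ioo (0:ℝ) 1) :
    (∑' n : ℕ, mcoef r α β ν μ τ ω z a n * t ^ n) ≤ ∑' n, mcoef r α β ν μ τ ω z a n := by
  apply Summable.tsum_le_tsum ?_ (mg_summable hr hα hβ hν hμ hτ hω hτω hq hz hapos hsum ht)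
    (mcoef_summable hr hα hν hμ hτ hτω hz hapos hsum)
  intro n
  apply mul_le_of_le_one_right (mcoef_pos (α := α) (β := β) (μ := μ) hr hν hτ hτω hz hapos n).le
  exact pow_le_one₀ ht.1.le ht.2.le

lemma mg_nonneg {t : ℝ} (ht : t ∈ Ioo (0:ℝ) 1) :
    0 ≤ ∑' n : ℕ, mcoef r α β ν μ τ ω z a n * t ^ n := by
  apply tsum_nonneg
  intro n
  have := (mcoef_pos (α := α) (β := β) (μ := μ) hr hν hτ hτω hz hapos n).le
  have := pow_nonneg ht.1.le n
  positivity

lemma mg_pos {t : ℝ} (ht : t ∈ Ioo (0:ℝ) 1) :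
    0 < ∑' n : ℕ, mcoef r α β ν μ τ ω z a n * t ^ n := by
  have h0 : mcoef r α β ν μ τ ω z a 0 * t ^ 0
      ≤ ∑' n : ℕ, mcoef r α β ν μ τ ω z a n * t ^ n := by
    apply Summable.le_tsum (mg_summable hr hα hβ hν hμ hτ hω hτω hq hz hapos hsum ht) 0
    intro j _
    have := (mcoef_pos (α := α) (β := β) (μ := μ) hr hν hτ hτω hz hapos j).le
    have := pow_nonneg ht.1.le j
    positivity
  have := mcoef_pos (α := α) (β := β) (μ := μ) hr hν hτ hτω hz hapos 0
  simp only [pow_zero, mul_one] at h0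
  linarith

lemma mker_meas : AEMeasurable (mker r α β ν μ τ ω q z a)
    (volume.restrict (Ioo (0:ℝ) 1)) := by
  have hg : AEMeasurable (fun t : ℝ => ∑' n : ℕ, mcoef r α β ν μ τ ω z a n * t ^ n)
      (volume.restrict (Ioo (0:ℝ) 1)) := by
    apply aemeasurable_of_tendsto_metrizable_ae atTop
      (f := fun (i : ℕ) (t : ℝ) => ∑ n ∈ Finset.range i, mcoef r α β ν μ τ ω z a n * t ^ n)
      (fun i => (Finset.measurable_sum (Finset.range i)
        (fun n _ => (measurable_id.pow_const n).const_mul _)).aemeasurable)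
    filter_upwards [ae_restrict_mem measurableSet_Ioo] with t ht
    exact (mg_summable hr hα hβ hν hμ hτ hω hτω hq hz hapos hsum ht).hasSum.tendsto_sum_nat
  have m1 : Measurable fun t : ℝ => t ^ τ := measurable_id.pow measurable_const
  have m2 : Measurable fun t : ℝ => Real.exp (-q / (1 - t)) :=
    (measurable_const.div (measurable_const.sub measurable_id)).exp
  have m3 : Measurable fun t : ℝ => (1 - t) ^ (ω - τ - 1) :=
    (measurable_const.sub measurable_id).pow measurable_const
  exact (((hg.mul m1.aemeasurable).mul m2.aemeasurable).mul m3.aemeasurable)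

lemma mker_nonneg : ∀ t ∈ Ioo (0:ℝ) 1, 0 ≤ mker r α β ν μ τ ω q z a t := by
  intro t ht
  unfold mker
  have h1 := mg_nonneg hr hα hβ hν hμ hτ hω hτω hq hz hapos hsum ht
  have h2 : (0:ℝ) ≤ t ^ τ := Real.rpow_nonneg ht.1.le τ
  have h3 : (0:ℝ) ≤ (1 - t) ^ (ω - τ - 1) := Real.rpow_nonneg (by linarith [ht.2]) _
  positivity

lemma mker_pos : ∀ t ∈ Ioo (0:ℝ) 1, 0 < mker r α β ν μ τ ω q z a t := by
  intro t ht
  unfold mker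
  have h1 := mg_pos hr hα hβ hν hμ hτ hω hτω hq hz hapos hsum ht
  have h2 : (0:ℝ) < t ^ τ := Real.rpow_pos_of_pos ht.1 τ
  have h3 : (0:ℝ) < (1 - t) ^ (ω - τ - 1) := Real.rpow_pos_of_pos (by linarith [ht.2]) _
  positivity

lemma mker_bound : ∀ t ∈ Ioo (0:ℝ) 1, mker r α β ν μ τ ω q z a t
    ≤ (∑' n, mcoef r α β ν μ τ ω z a n) * (1 - t) ^ (ω - τ - 1) := by
  intro t ht
  unfold mker
  have h3 : (0:ℝ) ≤ (1 - t) ^ (ω - τ - 1) := Real.rpow_nonneg (by linarith [ht.2]) _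
  apply mul_le_mul_of_nonneg_right ?_ h3
  have h1 := mg_nonneg hr hα hβ hν hμ hτ hω hτω hq hz hapos hsum ht
  have h2 : t ^ τ ≤ 1 := Real.rpow_le_one ht.1.le ht.2.le hτ.le
  have h2' : (0:ℝ) ≤ t ^ τ := Real.rpow_nonneg ht.1.le τ
  have h4 : Real.exp (-q / (1 - t)) ≤ 1 := by
    rw [Real.exp_le_one_iff]
    have : (0:ℝ) < 1 - t := by linarith [ht.2]
    rw [neg_div]
    simp only [Left.neg_nonpos_iff]
    positivity
  calc (∑' n : ℕ, mcoef r α β ν μ τ ω z a n * t ^ n) * t ^ τ * Real.exp (-q / (1 - t))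
      ≤ (∑' n : ℕ, mcoef r α β ν μ τ ω z a n * t ^ n) * t ^ τ := by
        apply mul_le_of_le_one_right (by positivity) h4
    _ ≤ (∑' n : ℕ, mcoef r α β ν μ τ ω z a n * t ^ n) := by
        apply mul_le_of_le_one_right h1 h2
    _ ≤ ∑' n, mcoef r α β ν μ τ ω z a n :=
        mg_le hr hα hβ hν hμ hτ hω hτω hq hz hapos hsum ht

end Ker

section Swap

variable {r α β ν μ τ ω q z : ℝ} {a : ℕ → ℝ}
variable (hr : 0 < r) (hα : 0 < α) (hβ : 0 < β) (hν : 0 < ν) (hμ : 0 < μ)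
  (hτ : 0 < τ) (hω : 0 < ω) (hτω : τ < ω) (hq : 0 ≤ q) (hz : z ∈ Ioo (0:ℝ) 1)
  (hapos : ∀ n : ℕ, 1 ≤ n → 0 < a n)
  (hsum : Summable fun n : ℕ => a (n + 1) ^ (β - μ * α))

set_option linter.unusedSectionVars false

include hr hα hβ hν hμ hτ hω hτω hq hz hapos hsum

lemma mker_swap {p : ℝ} (hp : 0 < p) :
    mathieuPQ μ ν τ ω α β r p q z a = lap (mker r α β ν μ τ ω q z a) 0 p := by
  have hcsum := mcoef_summable hr hα hν hμ hτ hτω hz hapos hsum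
  have hd : (-1:ℝ) < ω - τ - 1 := by linarith
  set c := mcoef r α β ν μ τ ω z a with hc
  set F : ℕ → ℝ → ℝ := fun n t => c n *
    (t ^ (τ + (n:ℝ)) * (1 - t) ^ (ω - τ - 1) * Real.exp (-p / t - q / (1 - t))) with hF
  have hFmeas : ∀ n, Measurable (F n) := by
    intro n
    apply Measurable.const_mul
    exact ((measurable_id.pow measurable_const).mul
      ((measurable_const.sub measurable_id).pow measurable_const)).mul
      (((measurable_const.div measurable_id).sub
        (measurable_const.div (measurable_const.sub measurable_id))).exp)
  have hFnonneg : ∀ n, ∀ t ∈ Ioo (0:ℝ) 1, 0 ≤ F n t := by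
    intro n t ht
    have h1 := (mcoef_pos (α := α) (β := β) (μ := μ) hr hν hτ hτω hz hapos n).le
    have h2 : (0:ℝ) ≤ t ^ (τ + (n:ℝ)) := Real.rpow_nonneg ht.1.le _
    have h3 : (0:ℝ) ≤ (1 - t) ^ (ω - τ - 1) := Real.rpow_nonneg (by linarith [ht.2]) _
    rw [hF]
    positivity
  have hFbound : ∀ n, ∀ t ∈ Ioo (0:ℝ) 1, ‖F n t‖ ≤ c n * (1 - t) ^ (ω - τ - 1) := by
    intro n t ht
    rw [Real.norm_eq_abs, abs_of_nonneg (hFnonneg n t ht), hF]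
    simp only
    have h1 := (mcoef_pos (α := α) (β := β) (μ := μ) hr hν hτ hτω hz hapos n).le
    have h3 : (0:ℝ) ≤ (1 - t) ^ (ω - τ - 1) := Real.rpow_nonneg (by linarith [ht.2]) _
    apply mul_le_mul_of_nonneg_left ?_ h1
    have h2 : t ^ (τ + (n:ℝ)) ≤ 1 := Real.rpow_le_one ht.1.le ht.2.le (add_nonneg hτ.le (Nat.cast_nonneg n))
    have h2' : (0:ℝ) ≤ t ^ (τ + (n:ℝ)) := Real.rpow_nonneg ht.1.le _
    have h4 : Real.exp (-p / t - q / (1 - t)) ≤ 1 := by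
      rw [Real.exp_le_one_iff]
      have hh1 : (0:ℝ) < 1 - t := by linarith [ht.2]
      have hh2 : -p / t ≤ 0 := by
        rw [neg_div]
        simp only [Left.neg_nonpos_iff]
        exact div_nonneg hp.le ht.1.le
      have hh3 : (0:ℝ) ≤ q / (1 - t) := div_nonneg hq hh1.le
      linarith
    have h5 : (0:ℝ) ≤ Real.exp (-p / t - q / (1 - t)) := (Real.exp_pos _).le
    calc t ^ (τ + (n:ℝ)) * (1 - t) ^ (ω - τ - 1) * Real.exp (-p / t - q / (1 - t))
        ≤ t ^ (τ + (n:ℝ)) * (1 - t) ^ (ω - τ - 1) := by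
          apply mul_le_of_le_one_right (by positivity) h4
      _ ≤ 1 * (1 - t) ^ (ω - τ - 1) := by
          apply mul_le_mul_of_nonneg_right h2 h3
      _ = (1 - t) ^ (ω - τ - 1) := one_mul _
  have hFint : ∀ n, Integrable (F n) (volume.restrict (Ioo (0:ℝ) 1)) := by
    intro n
    apply Integrable.mono' ((aux_base hd).const_mul (c n)) (hFmeas n).aestronglyMeasurable
    rw [ae_restrict_iff' measurableSet_Ioo]
    filter_upwards with t ht
    exact hFbound n t ht
  set B := ∫ t in Ioo (0:ℝ) 1, (1 - t) ^ (ω - τ - 1) with hBdef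
  have hnormint : ∀ n, (∫ t in Ioo (0:ℝ) 1, ‖F n t‖) ≤ c n * B := by
    intro n
    have step := setIntegral_mono_on (hFint n).norm ((aux_base hd).const_mul (c n))
      measurableSet_Ioo (hFbound n)
    calc (∫ t in Ioo (0:ℝ) 1, ‖F n t‖)
        ≤ ∫ t in Ioo (0:ℝ) 1, c n * (1 - t) ^ (ω - τ - 1) := step
      _ = c n * B := by rw [hBdef, integral_const_mul]
  have hsn : Summable (fun n => ∫ t in Ioo (0:ℝ) 1, ‖F n t‖) := by
    apply Summable.of_nonneg_of_le
      (fun n => integral_nonneg (fun t => norm_nonneg _)) hnormint (hcsum.mul_right B)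
  have hswap := MeasureTheory.integral_tsum_of_summable_integral_norm hFint hsn
  have hterm : ∀ n : ℕ, (2 * a (n + 1) ^ β * poch ν (n + 1) *
      betaPQ p q (τ + ((n : ℝ) + 1)) (ω - τ) * z ^ (n + 1) /
      ((Nat.factorial (n + 1) : ℝ) * betaE τ (ω - τ) * (a (n + 1) ^ α + r ^ 2) ^ μ))
      = ∫ t in Ioo (0:ℝ) 1, F n t := by
    intro n
    have h1 : betaPQ p q (τ + ((n:ℝ) + 1)) (ω - τ) = ∫ t in Ioo (0:ℝ) 1,
        t ^ (τ + (n:ℝ)) * (1 - t) ^ (ω - τ - 1) * Real.exp (-p / t - q / (1 - t)) := by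
      rw [betaPQ, show τ + ((n:ℝ) + 1) - 1 = τ + (n:ℝ) by ring]
    calc 2 * a (n + 1) ^ β * poch ν (n + 1) *
        betaPQ p q (τ + ((n : ℝ) + 1)) (ω - τ) * z ^ (n + 1) /
        ((Nat.factorial (n + 1) : ℝ) * betaE τ (ω - τ) * (a (n + 1) ^ α + r ^ 2) ^ μ)
        = c n * betaPQ p q (τ + ((n : ℝ) + 1)) (ω - τ) := by
          rw [hc]; unfold mcoef; ring
      _ = ∫ t in Ioo (0:ℝ) 1, F n t := by
          rw [h1, ← integral_const_mul]
  rw [mathieuPQ, tsum_congr hterm, hswap, lap]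
  apply setIntegral_congr_fun measurableSet_Ioo
  intro t ht
  have hexp : Real.exp (-p / t - q / (1 - t))
      = Real.exp (-p / t) * Real.exp (-q / (1 - t)) := by
    rw [← Real.exp_add]; ring_nf
  have hpow : ∀ n : ℕ, t ^ (τ + (n:ℝ)) = t ^ τ * t ^ n := by
    intro n; rw [Real.rpow_add ht.1, Real.rpow_natCast]
  calc ∑' n, F n t
      = ∑' n, (c n * t ^ n) *
        (t ^ τ * Real.exp (-q / (1 - t)) * (1 - t) ^ (ω - τ - 1) * Real.exp (-p / t)) := by
        apply tsum_congr
        intro n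
        rw [hF]
        simp only
        rw [hpow n, hexp]
        ring
    _ = (∑' n, c n * t ^ n) *
        (t ^ τ * Real.exp (-q / (1 - t)) * (1 - t) ^ (ω - τ - 1) * Real.exp (-p / t)) :=
        tsum_mul_right
    _ = mker r α β ν μ τ ω q z a t * (t⁻¹) ^ 0 * Real.exp (-p / t) := by
        rw [mker]
        simp only [pow_zero, mul_one, hc]
        ring

end Swap

set_option maxHeartbeats 1000000 in
theorem statement18 (r α β ν μ τ ω q z : ℝ) (a : ℕ → ℝ)
    (hr : 0 < r) (hα : 0 < α) (hβ : 0 < β) (hν : 0 < ν) (hμ : 0 < μ)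
    (hτ : 0 < τ) (hω : 0 < ω) (hτω : τ < ω) (hq : 0 ≤ q) (hz : z ∈ Ioo (0:ℝ) 1)
    (hapos : ∀ n : ℕ, 1 ≤ n → 0 < a n)
    (hainc : ∀ m n : ℕ, 1 ≤ m → m ≤ n → a m ≤ a n)
    (hatop : Tendsto a atTop atTop)
    (hsum : Summable fun n : ℕ => a (n + 1) ^ (β - μ * α)) :
    (ContDiffOn ℝ (⊤ : ℕ∞) (fun p => mathieuPQ μ ν τ ω α β r p q z a) (Ioi (0:ℝ)) ∧
      ∀ (n : ℕ) (p : ℝ), 0 < p →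
        0 ≤ (-1 : ℝ) ^ n * iteratedDeriv n (fun p => mathieuPQ μ ν τ ω α β r p q z a) p) ∧
    ConvexOn ℝ (Ioi (0:ℝ)) (fun p => Real.log (mathieuPQ μ ν τ ω α β r p q z a)) ∧
    ∀ p : ℝ, 0 < p →
      mathieuPQ μ ν τ ω α β r (p + 1) q z a ^ 2 ≤
        mathieuPQ μ ν τ ω α β r p q z a * mathieuPQ μ ν τ ω α β r (p + 2) q z a := by
  have hd : (-1:ℝ) < ω - τ - 1 := by linarith
  set H : ℝ → ℝ := mker r α β ν μ τ ω q z a with hHdef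
  have hH : AEMeasurable H (volume.restrict (Ioo (0:ℝ) 1)) :=
    mker_meas hr hα hβ hν hμ hτ hω hτω hq hz hapos hsum
  have h0 : ∀ t ∈ Ioo (0:ℝ) 1, 0 ≤ H t :=
    mker_nonneg hr hα hβ hν hμ hτ hω hτω hq hz hapos hsum
  have hbnd : ∀ t ∈ Ioo (0:ℝ) 1, H t
      ≤ (∑' n, mcoef r α β ν μ τ ω z a n) * (1 - t) ^ (ω - τ - 1) :=
    mker_bound hr hα hβ hν hμ hτ hω hτω hq hz hapos hsum
  have hpos : ∀ t ∈ Ioo (0:ℝ) 1, 0 < H t :=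
    mker_pos hr hα hβ hν hμ hτ hω hτω hq hz hapos hsum
  have hM : ∀ p : ℝ, 0 < p → mathieuPQ μ ν τ ω α β r p q z a = lap H 0 p :=
    fun p hp => mker_swap hr hα hβ hν hμ hτ hω hτω hq hz hapos hsum hp
  have hlpos : ∀ p : ℝ, 0 < p → 0 < lap H 0 p :=
    fun p hp => aux_pos hH h0 hbnd hd hpos hp
  have hMpos : ∀ p : ℝ, 0 < p → 0 < mathieuPQ μ ν τ ω α β r p q z a := by
    intro p hp; rw [hM p hp]; exact hlpos p hp
  have hconv : ConvexOn ℝ (Ioi (0:ℝ)) (fun p => Real.log (mathieuPQ μ ν τ ω α β r p q z a)) := by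
    constructor
    · exact convex_Ioi 0
    · intro x hx y hy va vb hva hvb hab
      simp only [smul_eq_mul]
      have hx0 : (0:ℝ) < x := hx
      have hy0 : (0:ℝ) < y := hy
      rcases eq_or_lt_of_le hva with h0a | h0a
      · have hvb1 : vb = 1 := by linarith
        rw [← h0a, hvb1]
        simp
      rcases eq_or_lt_of_le hvb with h0b | h0b
      · have hva1 : va = 1 := by linarith
        rw [← h0b, hva1]
        simp
      have hc0 : (0:ℝ) < va * x + vb * y := by positivity
      rw [hM _ hc0, hM x hx0, hM y hy0]
      have hh := aux_holder hH h0 hbnd hd hx0 hy0 h0a h0b hab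
      have hrx : (0:ℝ) < lap H 0 x ^ va := Real.rpow_pos_of_pos (hlpos x hx0) va
      have hry : (0:ℝ) < lap H 0 y ^ vb := Real.rpow_pos_of_pos (hlpos y hy0) vb
      calc Real.log (lap H 0 (va * x + vb * y))
          ≤ Real.log (lap H 0 x ^ va * lap H 0 y ^ vb) :=
            (Real.log_le_log_iff (hlpos _ hc0) (by positivity)).mpr hh
        _ = va * Real.log (lap H 0 x) + vb * Real.log (lap H 0 y) := by
            rw [Real.log_mul hrx.ne' hry.ne', Real.log_rpow (hlpos x hx0),
              Real.log_rpow (hlpos y hy0)]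
  refine ⟨⟨?_, ?_⟩, hconv, ?_⟩
  · apply (aux_contDiff hH h0 hbnd hd).congr
    intro x hx
    have hx0 : (0:ℝ) < x := hx
    rw [hM x hx0, aux_lapC_real hH x]
    simp
  · intro n p hp
    rw [aux_iter hH h0 hbnd hd (fun p hp => hM p hp) n p hp, ← mul_assoc, ← mul_pow]
    norm_num
    exact aux_nonneg h0 n p
  · intro p hp
    have h1 : (0:ℝ) < p + 1 := by linarith
    have h2 : (0:ℝ) < p + 2 := by linarith
    have key := hconv.2 (mem_Ioi.mpr hp) (mem_Ioi.mpr h2)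
      (by norm_num : (0:ℝ) ≤ 1/2) (by norm_num : (0:ℝ) ≤ 1/2) (by norm_num)
    simp only [smul_eq_mul] at key
    rw [show (1/2 : ℝ) * p + (1/2) * (p + 2) = p + 1 by ring] at key
    have hp1 := hMpos (p+1) h1
    have hpp := hMpos p hp
    have hp2 := hMpos (p+2) h2
    apply (Real.log_le_log_iff (by positivity) (by positivity)).mp
    rw [Real.log_pow, Real.log_mul hpp.ne' hp2.ne']
    push_cast
    linarith
end
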